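/- arXiv:2408.00430 — 15 statements merged into one kernel-verified Lean document; each statement's English description precedes it below -/
import Mathlib

section
/- Let A be a commutative ring, S ⊆ A a multiplicative set, and Q an ideal of A with Q ∩ S = ∅. If the ideal quotient (Q : s) is a weakly prime ideal of A for some s ∈ S, then Q is a weakly S-prime ideal of A. -/
/-- If (Q : s) is a weakly prime ideal for some s ∈ S, then Q is weakly S-prime. -/
theorem stmt_0 {A : Type*} [CommRing A] (S : Set A)
    (hS : ∀ a ∈ S, ∀ b ∈ S, a * b ∈ S) (Q : Ideal A)
    (hdisj : (Q : Set A) ∩ S = ∅)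
    (s : A) (hs : s ∈ S)
    (hweak : ∀ x y : A, x * y ≠ 0 → s * (x * y) ∈ Q → s * x ∈ Q ∨ s * y ∈ Q) :
    ∃ t ∈ S, ∀ x y : A, x * y ≠ 0 → x * y ∈ Q → t * x ∈ Q ∨ t * y ∈ Q := by
  exact ⟨s, hs, fun x y hne hQ => hweak x y hne (Q.mul_mem_left s hQ)⟩
end

section
/- Let A be a commutative ring, S ⊆ A a multiplicative set, Q an ideal with Q ∩ S = ∅, and P an ideal with P ∩ S ≠ ∅. If Q is a weakly S-prime ideal of A, then Q ∩ P is a weakly S-prime ideal of A. -/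
/-- If Q is weakly S-prime and P ∩ S ≠ ∅, then Q ∩ P is weakly S-prime. -/
theorem stmt_1 {A : Type*} [CommRing A] (S : Set A)
    (hS : ∀ a ∈ S, ∀ b ∈ S, a * b ∈ S) (Q P : Ideal A)
    (hdisj : (Q : Set A) ∩ S = ∅)
    (hP : ((P : Set A) ∩ S).Nonempty)
    (hQ : ∃ s ∈ S, ∀ x y : A, x * y ≠ 0 → x * y ∈ Q → s * x ∈ Q ∨ s * y ∈ Q) :
    ((Q ⊓ P : Ideal A) : Set A) ∩ S = ∅ ∧
      ∃ s ∈ S, ∀ x y : A, x * y ≠ 0 → x * y ∈ Q ⊓ P → s * x ∈ Q ⊓ P ∨ s * y ∈ Q ⊓ P := by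
  obtain ⟨t, htP, htS⟩ := hP
  obtain ⟨s, hsS, hs⟩ := hQ
  constructor
  · apply Set.eq_empty_of_subset_empty
    rw [← hdisj]
    exact Set.inter_subset_inter_left S (fun a ha => ha.1)
  · refine ⟨s * t, hS s hsS t htS, fun x y hne hxy => ?_⟩
    rcases hs x y hne hxy.1 with h | h
    · left
      exact ⟨by rw [mul_assoc, mul_comm t x, ← mul_assoc]; exact Q.mul_mem_right t h,
        by rw [mul_assoc]; exact P.mul_mem_left s (P.mul_mem_right x htP)⟩
    · right
      exact ⟨by rw [mul_assoc, mul_comm t y, ← mul_assoc]; exact Q.mul_mem_right t h,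
        by rw [mul_assoc]; exact P.mul_mem_left s (P.mul_mem_right y htP)⟩
end

section
/- Let A be a commutative ring, S ⊆ A a multiplicative set, Q an ideal of A with Q ∩ S = ∅, and J an ideal of A with J ∩ S ≠ ∅. If Q is a weakly S-prime ideal of A, then the product ideal J·Q is a weakly S-prime ideal of A. -/
namespace Ideal

variable {A : Type*} [CommRing A]

theorem mul_mul_mem_mul {J Q : Ideal A} {s t x : A} (ht : t ∈ J) (hsx : s * x ∈ Q) :
    s * t * x ∈ J * Q := by
  rw [mul_right_comm, mul_comm (s * x) t]
  exact mul_mem_mul ht hsx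

theorem weaklyPrime_mul_of_mem {J Q : Ideal A} {s t : A} (ht : t ∈ J)
    (hs : ∀ x y : A, x * y ≠ 0 → x * y ∈ Q → s * x ∈ Q ∨ s * y ∈ Q) :
    ∀ x y : A, x * y ≠ 0 → x * y ∈ J * Q → s * t * x ∈ J * Q ∨ s * t * y ∈ J * Q :=
  fun x y hne hxy =>
    (hs x y hne (mul_le_right hxy)).imp (mul_mul_mem_mul ht) (mul_mul_mem_mul ht)

end Ideal

/-- If Q is weakly S-prime and J ∩ S ≠ ∅, then J·Q is weakly S-prime. -/
theorem stmt_2 {A : Type*} [CommRing A] (S : Set A)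
    (hS : ∀ a ∈ S, ∀ b ∈ S, a * b ∈ S) (Q J : Ideal A)
    (hdisj : (Q : Set A) ∩ S = ∅)
    (hJ : ((J : Set A) ∩ S).Nonempty)
    (hQ : ∃ s ∈ S, ∀ x y : A, x * y ≠ 0 → x * y ∈ Q → s * x ∈ Q ∨ s * y ∈ Q) :
    ((J * Q : Ideal A) : Set A) ∩ S = ∅ ∧
      ∃ s ∈ S, ∀ x y : A, x * y ≠ 0 → x * y ∈ J * Q → s * x ∈ J * Q ∨ s * y ∈ J * Q := by
  obtain ⟨t, htJ, htS⟩ := hJ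
  obtain ⟨s, hsS, hs⟩ := hQ
  refine ⟨Set.subset_empty_iff.mp ?_, s * t, hS s hsS t htS, Ideal.weaklyPrime_mul_of_mem htJ hs⟩
  exact hdisj ▸ Set.inter_subset_inter_left S Ideal.mul_le_right
end

section
/- Let A be a commutative ring and S ⊆ T ⊆ A two multiplicative sets such that for each t ∈ T there exists t′ ∈ T with t·t′ ∈ S. If Q is a weakly T-prime ideal of A disjoint from T, then Q is a weakly S-prime ideal of A. -/
/-- If S ⊆ T, each t ∈ T has t' ∈ T with t·t' ∈ S, and Q is weakly T-prime,
then Q is weakly S-prime. -/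
theorem stmt_3 {A : Type*} [CommRing A] (S T : Set A)
    (hS : ∀ a ∈ S, ∀ b ∈ S, a * b ∈ S) (hT : ∀ a ∈ T, ∀ b ∈ T, a * b ∈ T)
    (hST : S ⊆ T) (hcond : ∀ t ∈ T, ∃ t' ∈ T, t * t' ∈ S)
    (Q : Ideal A) (hdisj : (Q : Set A) ∩ T = ∅)
    (hQ : ∃ t ∈ T, ∀ x y : A, x * y ≠ 0 → x * y ∈ Q → t * x ∈ Q ∨ t * y ∈ Q) :
    ∃ s ∈ S, ∀ x y : A, x * y ≠ 0 → x * y ∈ Q → s * x ∈ Q ∨ s * y ∈ Q := by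
  obtain ⟨t, htT, hprime⟩ := hQ
  obtain ⟨t', ht'T, hsS⟩ := hcond t htT
  refine ⟨t * t', hsS, fun x y hne hxy => ?_⟩
  rcases hprime x y hne hxy with h | h
  · left
    have : t * t' * x = t' * (t * x) := by ring
    rw [this]
    exact Q.mul_mem_left t' h
  · right
    have : t * t' * y = t' * (t * y) := by ring
    rw [this]
    exact Q.mul_mem_left t' h
end

section
/- Let A be a commutative ring, S ⊆ A a multiplicative set, and Q an ideal of A disjoint from S that is strongly weakly S-prime with associated element s ∈ S. If a, b ∈ A satisfy ab = 0 but sa ∉ Q and sb ∉ Q, then aQ = 0 and bQ = 0. -/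
lemma aux_5 {A : Type*} [CommRing A] (Q : Ideal A) (s : A)
    (hQ : ∀ I J : Ideal A, I * J ≠ ⊥ → I * J ≤ Q →
        (∀ x ∈ I, s * x ∈ Q) ∨ (∀ x ∈ J, s * x ∈ Q))
    (a b : A) (hab : a * b = 0) (ha : s * a ∉ Q) (hb : s * b ∉ Q) :
    ∀ q ∈ Q, a * q = 0 := by
  intro q hq
  by_contra hne
  set I := Ideal.span {a}
  set J := Ideal.span {b, q}
  have haI : a ∈ I := Ideal.subset_span rfl
  have hbJ : b ∈ J := Ideal.subset_span (by simp)
  have hqJ : q ∈ J := Ideal.subset_span (by simp)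
  have hmem : a * q ∈ I * J := Ideal.mul_mem_mul haI hqJ
  have hle : I * J ≤ Q := by
    refine Ideal.mul_le.mpr ?_
    intro x hx y hy
    obtain ⟨c, rfl⟩ := Ideal.mem_span_singleton'.mp hx
    obtain ⟨m, n, rfl⟩ := Ideal.mem_span_pair.mp hy
    have : c * a * (m * b + n * q) = c * m * (a * b) + c * n * (a * q) := by ring
    rw [this, hab, mul_zero, zero_add]
    exact Q.mul_mem_left _ (Q.mul_mem_left _ hq)
  have hne' : I * J ≠ ⊥ := by
    intro h
    exact hne (by simpa [h, Ideal.mem_bot] using hmem)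
  rcases hQ I J hne' hle with h | h
  · exact ha (h a haI)
  · exact hb (h b hbJ)

/-- If Q is strongly weakly S-prime associated to s and ab = 0 with
sa ∉ Q, sb ∉ Q, then aQ = 0 and bQ = 0. -/
theorem stmt_5 {A : Type*} [CommRing A] (S : Set A)
    (hS : ∀ a ∈ S, ∀ b ∈ S, a * b ∈ S) (Q : Ideal A)
    (hdisj : (Q : Set A) ∩ S = ∅) (s : A) (hs : s ∈ S)
    (hQ : ∀ I J : Ideal A, I * J ≠ ⊥ → I * J ≤ Q →
        (∀ x ∈ I, s * x ∈ Q) ∨ (∀ x ∈ J, s * x ∈ Q))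
    (a b : A) (hab : a * b = 0) (ha : s * a ∉ Q) (hb : s * b ∉ Q) :
    (∀ q ∈ Q, a * q = 0) ∧ (∀ q ∈ Q, b * q = 0) := by
  exact ⟨aux_5 Q s hQ a b hab ha hb,
    aux_5 Q s hQ b a (by rwa [mul_comm]) hb ha⟩
end

section
/- Let A be a commutative ring, S ⊆ A a multiplicative set, and Q an ideal of A disjoint from S that is strongly weakly S-prime with associated element s ∈ S. If a, b ∈ A satisfy ab = 0 but sa ∉ Q and sb ∉ Q, then for all q, q′ ∈ Q, qq′ = 0 (i.e., Q·Q = 0 under these hypotheses on a, b). -/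
/-! The ideals `(a) + Q` and `(b) + Q` have product inside `Q` because `ab = 0`, and `Q·Q` lies
in that product. So if some `qq' ≠ 0`, the product is nonzero and the strong weak `S`-primality
of `Q` forces `sa ∈ Q` or `sb ∈ Q`. -/

namespace Ideal

variable {A : Type*} [CommRing A]

theorem sup_mul_sup_le_of_mul_le {I J Q : Ideal A} (h : I * J ≤ Q) : (I ⊔ Q) * (J ⊔ Q) ≤ Q := by
  rw [sup_mul, mul_sup, mul_sup]
  exact sup_le (sup_le h mul_le_right) (sup_le mul_le_left mul_le_left)

theorem span_singleton_mul_span_singleton_eq_bot {a b : A} (hab : a * b = 0) :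
    span {a} * span {b} = ⊥ := by
  rw [span_singleton_mul_span_singleton, hab, span_singleton_eq_bot]

end Ideal

open Ideal in
theorem stmt_6_general {A : Type*} [CommRing A] (Q : Ideal A) (s : A)
    (hQ : ∀ I J : Ideal A, I * J ≠ ⊥ → I * J ≤ Q →
        (∀ x ∈ I, s * x ∈ Q) ∨ (∀ x ∈ J, s * x ∈ Q))
    (a b : A) (hab : a * b = 0) (ha : s * a ∉ Q) (hb : s * b ∉ Q) :
    ∀ q ∈ Q, ∀ q' ∈ Q, q * q' = 0 := by
  intro q hq q' hq'
  by_contra hqq'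
  have hle : (span {a} ⊔ Q) * (span {b} ⊔ Q) ≤ Q :=
    sup_mul_sup_le_of_mul_le ((span_singleton_mul_span_singleton_eq_bot hab).trans_le bot_le)
  have hne : (span {a} ⊔ Q) * (span {b} ⊔ Q) ≠ ⊥ := fun h =>
    hqq' <| (Submodule.mem_bot A).mp <| h ▸ mul_mem_mul (mem_sup_right hq) (mem_sup_right hq')
  rcases hQ _ _ hne hle with h | h
  · exact ha (h a (mem_sup_left (mem_span_singleton_self a)))
  · exact hb (h b (mem_sup_left (mem_span_singleton_self b)))

/-- If Q is strongly weakly S-prime associated to s and ab = 0 with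
sa ∉ Q, sb ∉ Q, then qq' = 0 for all q, q' ∈ Q. -/
theorem stmt_6 {A : Type*} [CommRing A] (S : Set A)
    (hS : ∀ a ∈ S, ∀ b ∈ S, a * b ∈ S) (Q : Ideal A)
    (hdisj : (Q : Set A) ∩ S = ∅) (s : A) (hs : s ∈ S)
    (hQ : ∀ I J : Ideal A, I * J ≠ ⊥ → I * J ≤ Q →
        (∀ x ∈ I, s * x ∈ Q) ∨ (∀ x ∈ J, s * x ∈ Q))
    (a b : A) (hab : a * b = 0) (ha : s * a ∉ Q) (hb : s * b ∉ Q) :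
    ∀ q ∈ Q, ∀ q' ∈ Q, q * q' = 0 :=
  stmt_6_general Q s hQ a b hab ha hb
end

section
/- Let A be a commutative ring and S ⊆ A a multiplicative set. If Q is a strongly weakly S-prime ideal of A (disjoint from S) that is not S-prime, then Q² = 0. -/
namespace Ideal

variable {A : Type*} [CommRing A]

theorem span_singleton_sup_mul_span_singleton_sup_le {Q : Ideal A} {x y : A} (hxy : x * y ∈ Q) :
    (span {x} ⊔ Q) * (span {y} ⊔ Q) ≤ Q := by
  rw [sup_mul, mul_sup, mul_sup, span_singleton_mul_span_singleton]
  exact sup_le (sup_le ((span_singleton_le_iff_mem Q).mpr hxy) mul_le_right)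
    (sup_le mul_le_left mul_le_left)

/-- Apply the hypothesis to `I = (x) + Q` and `J = (y) + Q`: then `I * J ≤ Q`, and `I * J ≠ 0`
because it contains `Q * Q`. -/
theorem mul_mem_or_mul_mem_of_sq_ne_bot {Q : Ideal A} {s : A} (hQ : Q * Q ≠ ⊥)
    (hs : ∀ I J : Ideal A, I * J ≠ ⊥ → I * J ≤ Q →
      (∀ x ∈ I, s * x ∈ Q) ∨ (∀ x ∈ J, s * x ∈ Q))
    {x y : A} (hxy : x * y ∈ Q) : s * x ∈ Q ∨ s * y ∈ Q := by
  have hne : (span {x} ⊔ Q) * (span {y} ⊔ Q) ≠ ⊥ := fun h =>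
    hQ (eq_bot_iff.2 (h ▸ mul_le_mul' le_sup_right le_sup_right))
  exact (hs _ _ hne (span_singleton_sup_mul_span_singleton_sup_le hxy)).imp
    (· x (mem_sup_left (mem_span_singleton_self x)))
    (· y (mem_sup_left (mem_span_singleton_self y)))

end Ideal

theorem stmt_7_general {A : Type*} [CommRing A] (S : Set A)
    (Q : Ideal A)
    (hsw : ∃ s ∈ S, ∀ I J : Ideal A, I * J ≠ ⊥ → I * J ≤ Q →
        (∀ x ∈ I, s * x ∈ Q) ∨ (∀ x ∈ J, s * x ∈ Q))
    (hns : ¬ ∃ s ∈ S, ∀ x y : A, x * y ∈ Q → s * x ∈ Q ∨ s * y ∈ Q) :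
    Q * Q = ⊥ := by
  by_contra hQ
  obtain ⟨s, hsS, hs⟩ := hsw
  exact hns ⟨s, hsS, fun _ _ => Ideal.mul_mem_or_mul_mem_of_sq_ne_bot hQ hs⟩

/-- A strongly weakly S-prime ideal that is not S-prime satisfies Q² = 0. -/
theorem stmt_7 {A : Type*} [CommRing A] (S : Set A)
    (hS : ∀ a ∈ S, ∀ b ∈ S, a * b ∈ S) (Q : Ideal A)
    (hdisj : (Q : Set A) ∩ S = ∅)
    (hsw : ∃ s ∈ S, ∀ I J : Ideal A, I * J ≠ ⊥ → I * J ≤ Q →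
        (∀ x ∈ I, s * x ∈ Q) ∨ (∀ x ∈ J, s * x ∈ Q))
    (hns : ¬ ∃ s ∈ S, ∀ x y : A, x * y ∈ Q → s * x ∈ Q ∨ s * y ∈ Q) :
    Q * Q = ⊥ :=
  stmt_7_general S Q hsw hns
end

section
/- Let A be a commutative ring and S ⊆ A a multiplicative set. If Q is a strongly weakly S-prime ideal of A (disjoint from S), then either Q is contained in the nilradical of A, or there exists s ∈ S such that s·(nilradical of A) ⊆ Q. -/
/-- A strongly weakly S-prime ideal is contained in the nilradical, or
s·(nilradical) ⊆ Q for some s ∈ S. -/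
theorem stmt_8 {A : Type*} [CommRing A] (S : Set A)
    (hS : ∀ a ∈ S, ∀ b ∈ S, a * b ∈ S) (Q : Ideal A)
    (hdisj : (Q : Set A) ∩ S = ∅)
    (hsw : ∃ s ∈ S, ∀ I J : Ideal A, I * J ≠ ⊥ → I * J ≤ Q →
        (∀ x ∈ I, s * x ∈ Q) ∨ (∀ x ∈ J, s * x ∈ Q)) :
    Q ≤ nilradical A ∨ ∃ s ∈ S, ∀ x ∈ nilradical A, s * x ∈ Q := by
  obtain ⟨s, hsS, hstr⟩ := hsw
  by_cases hQ2 : Q * Q = ⊥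
  · -- Q² = 0, so Q is contained in the nilradical
    left
    intro q hq
    refine ⟨2, ?_⟩
    have h : q * q ∈ Q * Q := Ideal.mul_mem_mul hq hq
    rw [hQ2] at h
    simpa [pow_two] using h
  · right
    refine ⟨s, hsS, ?_⟩
    have hnotin : ∀ t ∈ S, t ∉ Q := by
      intro t htS htQ
      have h : t ∈ ((Q : Set A) ∩ S) := ⟨htQ, htS⟩
      rw [hdisj] at h
      exact h
    -- Upgrade to the full (non-weak) strong S-prime property
    have hfull : ∀ I J : Ideal A, I * J ≤ Q →
        (∀ x ∈ I, s * x ∈ Q) ∨ (∀ x ∈ J, s * x ∈ Q) := by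
      intro I J hIJ
      have hle : (I ⊔ Q) * (J ⊔ Q) ≤ Q := by
        rw [Ideal.mul_le]
        intro r hr t ht
        obtain ⟨i, hi, q, hq, rfl⟩ := Submodule.mem_sup.mp hr
        obtain ⟨j, hj, q', hq', rfl⟩ := Submodule.mem_sup.mp ht
        have hij : i * j ∈ Q := hIJ (Ideal.mul_mem_mul hi hj)
        have hexp : (i + q) * (j + q') = i * j + (i * q' + (q * j + q * q')) := by
          ring
        rw [hexp]
        exact Q.add_mem hij (Q.add_mem (Q.mul_mem_left _ hq')
          (Q.add_mem (Q.mul_mem_right _ hq) (Q.mul_mem_right _ hq)))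
      have hne : (I ⊔ Q) * (J ⊔ Q) ≠ ⊥ := by
        intro h
        apply hQ2
        have hle2 : Q * Q ≤ (I ⊔ Q) * (J ⊔ Q) :=
          Ideal.mul_mono le_sup_right le_sup_right
        rw [h] at hle2
        exact le_bot_iff.mp hle2
      rcases hstr _ _ hne hle with h | h
      · exact Or.inl fun x hx => h x (Submodule.mem_sup_left hx)
      · exact Or.inr fun x hx => h x (Submodule.mem_sup_left hx)
    -- Key collapse: s·(s·a) ∈ Q implies s·a ∈ Q
    have hB : ∀ a : A, s * (s * a) ∈ Q → s * a ∈ Q := by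
      intro a ha
      have hle : Ideal.span {a} * (Ideal.span {s * s} ⊔ Q) ≤ Q := by
        rw [Ideal.mul_le]
        intro r hr t ht
        obtain ⟨c, rfl⟩ := Ideal.mem_span_singleton'.mp hr
        obtain ⟨u, hu, q, hq, rfl⟩ := Submodule.mem_sup.mp ht
        obtain ⟨d, rfl⟩ := Ideal.mem_span_singleton'.mp hu
        have hexp : c * a * (d * (s * s) + q) =
            c * d * (s * (s * a)) + (c * a) * q := by ring
        rw [hexp]
        exact Q.add_mem (Q.mul_mem_left _ ha) (Q.mul_mem_left _ hq)
      rcases hfull _ _ hle with h | h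
      · exact h a (Ideal.mem_span_singleton_self a)
      · exfalso
        have h3 := h (s * s) (Submodule.mem_sup_left (Ideal.mem_span_singleton_self _))
        exact hnotin _ (hS s hsS _ (hS s hsS s hsS)) h3
    -- Descent: s·aᵏ ∈ Q implies s·a ∈ Q
    have hD : ∀ k : ℕ, ∀ a : A, s * a ^ k ∈ Q → s * a ∈ Q := by
      intro k
      induction k with
      | zero =>
        intro a ha
        rw [pow_zero, mul_one] at ha
        exact (hnotin s hsS ha).elim
      | succ k ih =>
        intro a ha
        have hle : Ideal.span {s * a} * (Ideal.span {a ^ k} ⊔ Q) ≤ Q := by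
          rw [Ideal.mul_le]
          intro r hr t ht
          obtain ⟨c, rfl⟩ := Ideal.mem_span_singleton'.mp hr
          obtain ⟨u, hu, q, hq, rfl⟩ := Submodule.mem_sup.mp ht
          obtain ⟨d, rfl⟩ := Ideal.mem_span_singleton'.mp hu
          have hexp : c * (s * a) * (d * a ^ k + q) =
              c * d * (s * a ^ (k + 1)) + (c * (s * a)) * q := by ring
          rw [hexp]
          exact Q.add_mem (Q.mul_mem_left _ ha) (Q.mul_mem_left _ hq)
        rcases hfull _ _ hle with h | h
        · exact hB a (h (s * a) (Ideal.mem_span_singleton_self _))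
        · exact ih a (h (a ^ k) (Submodule.mem_sup_left (Ideal.mem_span_singleton_self _)))
    intro x hx
    obtain ⟨n, hn⟩ := hx
    exact hD n x (by rw [hn, mul_zero]; exact Q.zero_mem)
end

section
/- Let A be a commutative ring, S ⊆ A a multiplicative set, M an A-module, and Q a strongly weakly S-prime ideal of A that is not S-prime. If M = Q·M, then M = 0. -/
/-- Nakayama-type lemma: if Q is strongly weakly S-prime but not S-prime and
M = Q·M, then M = 0. -/
theorem stmt_10 {A : Type*} [CommRing A] (S : Set A)
    (hS : ∀ a ∈ S, ∀ b ∈ S, a * b ∈ S) (Q : Ideal A)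
    (hdisj : (Q : Set A) ∩ S = ∅)
    (hsw : ∃ s ∈ S, ∀ I J : Ideal A, I * J ≠ ⊥ → I * J ≤ Q →
        (∀ x ∈ I, s * x ∈ Q) ∨ (∀ x ∈ J, s * x ∈ Q))
    (hns : ¬ ∃ s ∈ S, ∀ x y : A, x * y ∈ Q → s * x ∈ Q ∨ s * y ∈ Q)
    (M : Type*) [AddCommGroup M] [Module A M]
    (hM : (⊤ : Submodule A M) = Q • (⊤ : Submodule A M)) :
    ∀ m : M, m = 0 := by
  obtain ⟨s, hsS, hs⟩ := hsw
  -- First: Q * Q = ⊥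
  have hQQ : Q * Q = ⊥ := by
    by_contra hne
    apply hns
    refine ⟨s, hsS, fun x y hxy => ?_⟩
    set I := Ideal.span {x} ⊔ Q with hI
    set J := Ideal.span {y} ⊔ Q with hJ
    have hIJ : I * J ≤ Q := by
      refine Ideal.mul_le.2 fun a ha b hb => ?_
      obtain ⟨a1, ha1, q1, hq1, rfl⟩ := Submodule.mem_sup.mp ha
      obtain ⟨b1, hb1, q2, hq2, rfl⟩ := Submodule.mem_sup.mp hb
      obtain ⟨r, rfl⟩ := Ideal.mem_span_singleton'.mp ha1
      obtain ⟨t, rfl⟩ := Ideal.mem_span_singleton'.mp hb1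
      have heq : (r * x + q1) * (t * y + q2)
          = (r * t) * (x * y) + (r * x) * q2 + q1 * (t * y + q2) := by ring
      rw [heq]
      exact Q.add_mem (Q.add_mem (Q.mul_mem_left _ hxy) (Q.mul_mem_left _ hq2))
        (Q.mul_mem_right _ hq1)
    have hIJne : I * J ≠ ⊥ := by
      intro h
      apply hne
      refine le_bot_iff.mp ?_
      rw [← h]
      exact Ideal.mul_mono le_sup_right le_sup_right
    rcases hs I J hIJne hIJ with h | h
    · exact Or.inl (h x (le_sup_left (α := Ideal A) (Ideal.subset_span rfl)))
    · exact Or.inr (h y (le_sup_left (α := Ideal A) (Ideal.subset_span rfl)))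
  -- Now M = Q • M = (Q*Q) • M = ⊥
  have : (⊤ : Submodule A M) = ⊥ := by
    calc (⊤ : Submodule A M) = Q • (⊤ : Submodule A M) := hM
    _ = Q • (Q • (⊤ : Submodule A M)) := congrArg (Q • ·) hM
    _ = (Q • Q) • (⊤ : Submodule A M) := (Submodule.smul_assoc Q Q ⊤).symm
    _ = (Q * Q) • (⊤ : Submodule A M) := by rw [Ideal.smul_eq_mul]
    _ = ⊥ := by rw [hQQ]; exact Submodule.bot_smul ⊤
  intro m
  have : m ∈ (⊥ : Submodule A M) := this ▸ Submodule.mem_top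
  simpa using this
end

section
/- Let A be a commutative ring, S ⊆ A a multiplicative set, and Q an ideal disjoint from S. Then Q is strongly weakly S-prime if and only if there exists s ∈ S such that for every a ∈ A with a ∉ (Q : s), either (Q : a) ⊆ (Q : s) or (Q : a) = (0 : a). -/
/-- Q is strongly weakly S-prime iff there exists s ∈ S such that for every
a ∉ (Q : s), either (Q : a) ⊆ (Q : s) or (Q : a) = (0 : a). -/
theorem stmt_11 {A : Type*} [CommRing A] (S : Set A)
    (hS : ∀ a ∈ S, ∀ b ∈ S, a * b ∈ S) (Q : Ideal A)
    (hdisj : (Q : Set A) ∩ S = ∅) :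
    (∃ s ∈ S, ∀ I J : Ideal A, I * J ≠ ⊥ → I * J ≤ Q →
        (∀ x ∈ I, s * x ∈ Q) ∨ (∀ x ∈ J, s * x ∈ Q)) ↔
      (∃ s ∈ S, ∀ a : A, s * a ∉ Q →
        ((∀ x : A, x * a ∈ Q → s * x ∈ Q) ∨ (∀ x : A, x * a ∈ Q ↔ x * a = 0))) := by
  constructor
  · rintro ⟨s, hsS, hs⟩
    refine ⟨s, hsS, fun a ha => ?_⟩
    by_cases h : ∀ x : A, x * a ∈ Q → s * x ∈ Q
    · exact Or.inl h
    · push_neg at h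
      obtain ⟨x0, hx0Q, hx0s⟩ := h
      right
      intro y
      constructor
      · intro hy
        by_contra hy0
        have key : ∀ c : A, c * a ∈ Q → c * a ≠ 0 → s * c ∈ Q := by
          intro c hc hc0
          have hne : Ideal.span {c} * Ideal.span {a} ≠ ⊥ := by
            rw [Ideal.span_singleton_mul_span_singleton]
            simpa [Ideal.span_singleton_eq_bot] using hc0
          have hle : Ideal.span {c} * Ideal.span {a} ≤ Q := by
            rw [Ideal.span_singleton_mul_span_singleton, Ideal.span_singleton_le_iff_mem]
            exact hc
          rcases hs _ _ hne hle with h1 | h2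
          · exact h1 c (Ideal.mem_span_singleton_self c)
          · exact absurd (h2 a (Ideal.mem_span_singleton_self a)) ha
        have hsy : s * y ∈ Q := key y hy hy0
        have hsum : (x0 + y) * a ≠ 0 := by
          intro h0
          have hx00 : x0 * a ≠ 0 := by
            intro h1
            rw [add_mul, h1, zero_add] at h0
            exact hy0 h0
          exact hx0s (key x0 hx0Q hx00)
        have hsumQ : (x0 + y) * a ∈ Q := by
          rw [add_mul]; exact Q.add_mem hx0Q hy
        have hst := key _ hsumQ hsum
        rw [mul_add] at hst
        exact hx0s (by simpa using Q.sub_mem hst hsy)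
      · intro h0; rw [h0]; exact Q.zero_mem
  · rintro ⟨s, hsS, hs⟩
    refine ⟨s, hsS, fun I J hne hle => ?_⟩
    by_contra h
    push_neg at h
    obtain ⟨⟨p, hpI, hps⟩, q, hqJ, hqs⟩ := h
    have hexij : ∃ i ∈ I, ∃ j ∈ J, i * j ≠ 0 := by
      by_contra hc
      push_neg at hc
      apply hne
      rw [eq_bot_iff]
      exact Ideal.mul_le.mpr fun r hr t ht => by simpa using hc r hr t ht
    obtain ⟨i, hiI, j, hjJ, hij⟩ := hexij
    have hpq : p * q ∈ Q := hle (Ideal.mul_mem_mul hpI hqJ)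
    rcases hs q hqs with h1 | h2
    · exact hps (h1 p hpq)
    · have hiq : i * q = 0 := (h2 i).mp (hle (Ideal.mul_mem_mul hiI hqJ))
      by_cases hj : s * j ∈ Q
      · have hqj : s * (q + j) ∉ Q := by
          intro hc
          rw [mul_add] at hc
          exact hqs (by simpa using Q.sub_mem hc hj)
        rcases hs _ hqj with h3 | h4
        · exact hps (h3 p (hle (Ideal.mul_mem_mul hpI (J.add_mem hqJ hjJ))))
        · have h5 := (h4 i).mp (hle (Ideal.mul_mem_mul hiI (J.add_mem hqJ hjJ)))
          rw [mul_add, hiq, zero_add] at h5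
          exact hij h5
      · rcases hs j hj with h3 | h4
        · exact hps (h3 p (hle (Ideal.mul_mem_mul hpI hjJ)))
        · exact hij ((h4 i).mp (hle (Ideal.mul_mem_mul hiI hjJ)))
end

section
/- Let A be a commutative ring and Q an ideal of A. Then Q is strongly weakly prime (for all ideals I, J, 0 ≠ I·J ⊆ Q implies I ⊆ Q or J ⊆ Q) if and only if for every a ∈ A with a ∉ Q, either (Q : a) = Q or (Q : a) = (0 : a). -/
/-- Q is strongly weakly prime iff for every a ∉ Q, either (Q : a) = Q or
(Q : a) = (0 : a). -/
theorem stmt_12 {A : Type*} [CommRing A] (Q : Ideal A) :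
    (∀ I J : Ideal A, I * J ≠ ⊥ → I * J ≤ Q → I ≤ Q ∨ J ≤ Q) ↔
      (∀ a : A, a ∉ Q →
        ((∀ x : A, x * a ∈ Q ↔ x ∈ Q) ∨ (∀ x : A, x * a ∈ Q ↔ x * a = 0))) := by
  constructor
  · intro h a ha
    have key : ∀ x : A, x * a ∈ Q → x * a ≠ 0 → x ∈ Q := by
      intro x hxa hne
      have := h (Ideal.span {x}) (Ideal.span {a}) ?_ ?_
      · rcases this with h1 | h1
        · exact h1 (Ideal.subset_span rfl)
        · exact absurd (h1 (Ideal.subset_span rfl)) ha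
      · rw [Ideal.span_singleton_mul_span_singleton]
        simpa [Ideal.span_singleton_eq_bot] using hne
      · rw [Ideal.span_singleton_mul_span_singleton,
          Ideal.span_singleton_le_iff_mem]
        exact hxa
    by_cases hc : ∀ x : A, x * a ∈ Q → x ∈ Q
    · left; exact fun x => ⟨hc x, fun hx => Q.mul_mem_right a hx⟩
    · right
      push_neg at hc
      obtain ⟨y, hyQ, hyn⟩ := hc
      have hy0 : y * a = 0 := by
        by_contra h0; exact hyn (key y hyQ h0)
      intro x
      constructor
      · intro hx
        by_contra h0
        have hxQ : x ∈ Q := key x hx h0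
        have h1 : (x + y) * a ∈ Q := by rw [add_mul, hy0, add_zero]; exact hx
        have h2 : (x + y) * a ≠ 0 := by rw [add_mul, hy0, add_zero]; exact h0
        have := key _ h1 h2
        exact hyn (by simpa using Q.sub_mem this hxQ)
      · intro hx; rw [hx]; exact Q.zero_mem
  · intro h I J hne hle
    by_contra hcon
    push_neg at hcon
    obtain ⟨hI, hJ⟩ := hcon
    obtain ⟨a0, ha0I, ha0Q⟩ := SetLike.not_le_iff_exists.mp hI
    have ann : ∀ a ∈ I, a ∉ Q → ∀ b ∈ J, b * a = 0 := by
      intro a haI haQ b hbJ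
      rcases h a haQ with hc | hc
      · exact absurd (fun z hzJ => (hc z).mp
          (hle (by simpa [mul_comm] using Ideal.mul_mem_mul haI hzJ))) hJ
      · exact (hc b).mp (hle (by simpa [mul_comm] using Ideal.mul_mem_mul haI hbJ))
    have hexists : ¬ ∀ x ∈ I, ∀ y ∈ J, x * y = 0 := by
      intro H
      exact hne (le_bot_iff.mp (Ideal.mul_le.mpr fun r hr s hs => by
        simpa [Ideal.mem_bot] using H r hr s hs))
    push_neg at hexists
    obtain ⟨x, hxI, y, hyJ, hxy⟩ := hexists
    by_cases hxQ : x ∈ Q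
    · have h1 : a0 + x ∉ Q := fun hm => ha0Q (by simpa using Q.sub_mem hm hxQ)
      have h2 := ann (a0 + x) (I.add_mem ha0I hxI) h1 y hyJ
      have h3 := ann a0 ha0I ha0Q y hyJ
      rw [mul_add, h3, zero_add] at h2
      exact hxy (by rwa [mul_comm])
    · exact hxy (by rw [mul_comm]; exact ann x hxI hxQ y hyJ)
end

section
/- Let A be a commutative ring, S ⊆ A a multiplicative set, and Q a strongly weakly S-prime ideal of A that is not S-prime. Then there exists s ∈ S such that s·(nilradical of A)·Q = 0. -/
/-- If Q is strongly weakly S-prime but not S-prime, then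
s·(nilradical A)·Q = 0 for some s ∈ S. -/
theorem stmt_13 {A : Type*} [CommRing A] (S : Set A)
    (hS : ∀ a ∈ S, ∀ b ∈ S, a * b ∈ S) (Q : Ideal A)
    (hdisj : (Q : Set A) ∩ S = ∅)
    (hsw : ∃ s ∈ S, ∀ I J : Ideal A, I * J ≠ ⊥ → I * J ≤ Q →
        (∀ x ∈ I, s * x ∈ Q) ∨ (∀ x ∈ J, s * x ∈ Q))
    (hns : ¬ ∃ s ∈ S, ∀ x y : A, x * y ∈ Q → s * x ∈ Q ∨ s * y ∈ Q) :
    ∃ s ∈ S, ∀ n ∈ nilradical A, ∀ q ∈ Q, s * n * q = 0 := by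
  obtain ⟨s, hsS, hs⟩ := hsw
  have hdisj' : ∀ x, x ∈ Q → x ∉ S := by
    intro x hxQ hxS
    have : x ∈ (Q : Set A) ∩ S := ⟨hxQ, hxS⟩
    rw [hdisj] at this
    exact this
  -- powers of s are in S
  have hspow : ∀ m : ℕ, s ^ (m + 1) ∈ S := by
    intro m
    induction m with
    | zero => simpa using hsS
    | succ m ih => rw [pow_succ]; exact hS _ ih _ hsS
  -- key lemma
  have key : ∀ c d : A, c * d ∈ Q →
      ((Ideal.span {c} ⊔ Q) * (Ideal.span {d} ⊔ Q) = ⊥) ∨ s * c ∈ Q ∨ s * d ∈ Q := by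
    intro c d hcd
    set I := Ideal.span {c} ⊔ Q with hI
    set J := Ideal.span {d} ⊔ Q with hJ
    have hIJ : I * J ≤ Q := by
      rw [Ideal.mul_le]
      intro r hr t ht
      obtain ⟨u, hu, q, hq, rfl⟩ := Submodule.mem_sup.mp hr
      obtain ⟨v, hv, q', hq', rfl⟩ := Submodule.mem_sup.mp ht
      obtain ⟨e, rfl⟩ := Ideal.mem_span_singleton'.mp hu
      obtain ⟨f, rfl⟩ := Ideal.mem_span_singleton'.mp hv
      have : (e * c + q) * (f * d + q') =
          (e * f) * (c * d) + (e * c) * q' + (f * d + q') * q := by ring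
      rw [this]
      exact Q.add_mem (Q.add_mem (Q.mul_mem_left _ hcd) (Q.mul_mem_left _ hq'))
        (Q.mul_mem_left _ hq)
    by_cases h0 : I * J = ⊥
    · exact Or.inl h0
    · rcases hs I J h0 hIJ with h | h
      · exact Or.inr (Or.inl (h c (le_sup_left (a := Ideal.span {c})
          (Ideal.mem_span_singleton_self c))))
      · exact Or.inr (Or.inr (h d (le_sup_left (a := Ideal.span {d})
          (Ideal.mem_span_singleton_self d))))
  -- from non-S-primeness get a, b
  push_neg at hns
  obtain ⟨a, b, hab, hsa, hsb⟩ := hns s hsS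
  have habbot : (Ideal.span {a} ⊔ Q) * (Ideal.span {b} ⊔ Q) = ⊥ := by
    rcases key a b hab with h | h | h
    · exact h
    · exact absurd h hsa
    · exact absurd h hsb
  -- Q² = 0 elementwise
  have hQ2 : ∀ x ∈ Q, ∀ y ∈ Q, x * y = 0 := by
    intro x hx y hy
    have hxI : x ∈ Ideal.span {a} ⊔ Q := le_sup_right (a := Ideal.span {a}) hx
    have hyJ : y ∈ Ideal.span {b} ⊔ Q := le_sup_right (a := Ideal.span {b}) hy
    have := Ideal.mul_mem_mul hxI hyJ
    rw [habbot] at this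
    exact Ideal.mem_bot.mp this
  -- Claim: for nilpotent n, s*n ∈ Q or n*Q = 0
  have claim : ∀ n : A, IsNilpotent n → s * n ∈ Q ∨ ∀ q ∈ Q, n * q = 0 := by
    intro n ⟨k, hk⟩
    by_contra hcon
    push_neg at hcon
    obtain ⟨hsn, q, hqQ, hnq⟩ := hcon
    rcases Nat.eq_zero_or_pos k with rfl | hkpos
    · rw [pow_zero] at hk
      exact hnq (by rw [← mul_one (n * q), hk, mul_zero])
    -- descent: s^i * n^(k-i) ∈ Q for all i ≤ k
    have aux : ∀ i, i ≤ k → s ^ i * n ^ (k - i) ∈ Q := by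
      intro i
      induction i with
      | zero =>
        intro _
        simp [hk]
      | succ i ih =>
        intro hik
        have hi : i ≤ k := Nat.le_of_succ_le hik
        have hmem := ih hi
        have hcd : n * (s ^ i * n ^ (k - i - 1)) ∈ Q := by
          have h1 : n ^ (k - i) = n ^ (k - i - 1) * n := by
            rw [← pow_succ]; congr 1; omega
          have heq : n * (s ^ i * n ^ (k - i - 1)) = s ^ i * n ^ (k - i) := by
            rw [h1]; ring
          rw [heq]; exact hmem
        rcases key n (s ^ i * n ^ (k - i - 1)) hcd with h | h | h
        · exfalso
          have hnI : n ∈ Ideal.span {n} ⊔ Q :=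
            le_sup_left (a := Ideal.span {n}) (Ideal.mem_span_singleton_self n)
          have hqJ : q ∈ Ideal.span {s ^ i * n ^ (k - i - 1)} ⊔ Q :=
            le_sup_right (a := Ideal.span {s ^ i * n ^ (k - i - 1)}) hqQ
          have := Ideal.mul_mem_mul hnI hqJ
          rw [h] at this
          exact hnq (Ideal.mem_bot.mp this)
        · exact absurd h hsn
        · have heq : s * (s ^ i * n ^ (k - i - 1)) = s ^ (i + 1) * n ^ (k - (i + 1)) := by
            have : k - (i + 1) = k - i - 1 := by omega
            rw [this, pow_succ]; ring
          rw [heq] at h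
          exact h
    have hk' := aux k le_rfl
    simp only [Nat.sub_self, pow_zero, mul_one] at hk'
    obtain ⟨m, rfl⟩ := Nat.exists_eq_add_of_lt hkpos
    exact hdisj' _ hk' (by simpa using hspow m)
  -- conclude
  refine ⟨s, hsS, fun n hn q hq => ?_⟩
  rcases claim n (mem_nilradical.mp hn) with h | h
  · exact hQ2 _ h _ hq
  · rw [mul_assoc, h q hq, mul_zero]
end

section
/- Let A be a commutative ring, S ⊆ A a multiplicative set with 1 ∈ S, and Q a weakly S-prime ideal of A. Then the localized ideal S⁻¹Q is a weakly prime ideal of the localization S⁻¹A. -/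
namespace Ideal

variable {R : Type*} [CommSemiring R]

def IsWeaklyPrime (P : Ideal R) : Prop :=
  P ≠ ⊤ ∧ ∀ a b : R, a * b ≠ 0 → a * b ∈ P → a ∈ P ∨ b ∈ P

def IsWeaklySPrime (M : Submonoid R) (Q : Ideal R) : Prop :=
  Disjoint (M : Set R) Q ∧
    ∃ s ∈ M, ∀ x y : R, x * y ≠ 0 → x * y ∈ Q → s * x ∈ Q ∨ s * y ∈ Q

/-- Write `a = x / u`, `b = y / v`. From `ab ∈ S⁻¹Q` we get `c * x * y ∈ Q` for some `c ∈ M`, and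
`ab ≠ 0` forces `c * x * y ≠ 0`; weak `M`-primality applied to `(c * x) * y` concludes. -/
theorem IsWeaklySPrime.map_algebraMap {M : Submonoid R} {Q : Ideal R} (hQ : Q.IsWeaklySPrime M)
    (S : Type*) [CommSemiring S] [Algebra R S] [IsLocalization M S] :
    (Q.map (algebraMap R S)).IsWeaklyPrime := by
  obtain ⟨hdisj, s, hs, hsQ⟩ := hQ
  refine ⟨(IsLocalization.map_algebraMap_ne_top_iff_disjoint M S Q).mpr hdisj, ?_⟩
  intro a b hab0 hab
  obtain ⟨⟨x, u⟩, rfl⟩ := IsLocalization.mk'_surjective M a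
  obtain ⟨⟨y, v⟩, rfl⟩ := IsLocalization.mk'_surjective M b
  rw [← IsLocalization.mk'_mul] at hab0 hab
  obtain ⟨c, hc, hcxy⟩ := (IsLocalization.mk'_mem_map_algebraMap_iff M S Q _ _).mp hab
  have hcxy0 : c * x * y ≠ 0 := fun h ↦
    hab0 ((IsLocalization.mk'_eq_zero_iff _ _).mpr ⟨⟨c, hc⟩, by rwa [← mul_assoc]⟩)
  simp only [IsLocalization.mk'_mem_map_algebraMap_iff M]
  rcases hsQ (c * x) y hcxy0 (by rwa [mul_assoc]) with h | h
  · exact Or.inl ⟨s * c, mul_mem hs hc, by rwa [mul_assoc]⟩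
  · exact Or.inr ⟨s, hs, h⟩

end Ideal

/-- If Q is weakly S-prime, then S⁻¹Q is weakly prime in S⁻¹A. -/
theorem stmt_15 {A : Type*} [CommRing A] (S : Submonoid A) (Q : Ideal A)
    (hdisj : (Q : Set A) ∩ (S : Set A) = ∅)
    (hQ : ∃ s ∈ S, ∀ x y : A, x * y ≠ 0 → x * y ∈ Q → s * x ∈ Q ∨ s * y ∈ Q) :
    Ideal.map (algebraMap A (Localization S)) Q ≠ ⊤ ∧
      ∀ a b : Localization S, a * b ≠ 0 →
        a * b ∈ Ideal.map (algebraMap A (Localization S)) Q →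
        a ∈ Ideal.map (algebraMap A (Localization S)) Q ∨
          b ∈ Ideal.map (algebraMap A (Localization S)) Q :=
  have hSQ : Disjoint (S : Set A) Q := Set.disjoint_iff_inter_eq_empty.mpr (by rwa [Set.inter_comm])
  Ideal.IsWeaklySPrime.map_algebraMap ⟨hSQ, hQ⟩ (Localization S)
end

section
/- Let A be an integral domain and S ⊆ A a multiplicative set with 1 ∈ S such that the localization S⁻¹A is a field. Then the zero ideal is the only weakly S-prime ideal of A. -/
/-! Since `S⁻¹A` is nontrivial, `0 ∉ S`, so the domain `A` embeds in the field `S⁻¹A`. A nonzero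
`q` thus becomes a unit in `S⁻¹A`, which means it divides an element of `S`; hence an ideal
disjoint from `S` has no nonzero element. For the zero ideal the weak `S`-primality condition is
vacuous. -/

section LocalizationField

variable {A : Type*} [CommRing A] (S : Submonoid A)

theorem zero_notMem_of_isField_localization (hfield : IsField (Localization S)) :
    (0 : A) ∉ S := fun h0 =>
  @not_subsingleton _ hfield.nontrivial (IsLocalization.subsingleton (M := S) h0)

theorem exists_mem_dvd_of_isField_localization [IsDomain A] (hfield : IsField (Localization S))
    {q : A} (hq : q ≠ 0) : ∃ s ∈ S, q ∣ s := by
  have hS : S ≤ nonZeroDivisors A := le_nonZeroDivisors_of_noZeroDivisors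
    (zero_notMem_of_isField_localization S hfield)
  have hq' : algebraMap A (Localization S) q ≠ 0 :=
    (map_ne_zero_iff _ (IsLocalization.injective _ hS)).mpr hq
  let := hfield.toField
  exact (IsLocalization.algebraMap_isUnit_iff S).mp hq'.isUnit

theorem Ideal.eq_bot_of_inter_eq_empty_of_isField_localization [IsDomain A]
    (hfield : IsField (Localization S)) {Q : Ideal A} (hQ : (Q : Set A) ∩ S = ∅) : Q = ⊥ := by
  refine (Submodule.eq_bot_iff Q).mpr fun q hqQ => ?_
  by_contra hq
  obtain ⟨s, hsS, hqs⟩ := exists_mem_dvd_of_isField_localization S hfield hq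
  exact hQ.subset ⟨Q.mem_of_dvd hqs hqQ, hsS⟩

end LocalizationField

/-- If A is a domain and S⁻¹A is a field, the zero ideal is the only weakly
S-prime ideal of A. -/
theorem stmt_18 {A : Type*} [CommRing A] [IsDomain A] (S : Submonoid A)
    (hfield : IsField (Localization S)) :
    ∀ Q : Ideal A,
      ((Q : Set A) ∩ (S : Set A) = ∅ ∧
        ∃ s ∈ S, ∀ x y : A, x * y ≠ 0 → x * y ∈ Q → s * x ∈ Q ∨ s * y ∈ Q) ↔
      Q = ⊥ := by
  intro Q
  constructor
  · rintro ⟨hQ, -⟩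
    exact Ideal.eq_bot_of_inter_eq_empty_of_isField_localization S hfield hQ
  · rintro rfl
    refine ⟨?_, 1, S.one_mem, fun x y hxy hmem => (hxy (Ideal.mem_bot.mp hmem)).elim⟩
    refine Set.eq_empty_of_forall_notMem fun a ⟨ha0, haS⟩ => ?_
    rw [SetLike.mem_coe, Ideal.mem_bot] at ha0
    exact zero_notMem_of_isField_localization S hfield (ha0 ▸ haS)
end

section
/- Let A₁, A₂ be commutative rings, S₁ ⊆ A₁, S₂ ⊆ A₂ multiplicative sets, and Q₁, Q₂ nonzero ideals of A₁, A₂ respectively with (Q₁ × Q₂) ∩ (S₁ × S₂) = ∅. Then the following are equivalent: (i) Q₁ × Q₂ is a weakly (S₁ × S₂)-prime ideal of A₁ × A₂; (ii) either Q₁ is S₁-prime and Q₂ ∩ S₂ ≠ ∅, or Q₂ is S₂-prime and Q₁ ∩ S₁ ≠ ∅; (iii) Q₁ × Q₂ is an (S₁ × S₂)-prime ideal of A₁ × A₂. -/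
/-- Characterization of weakly (S₁ × S₂)-prime ideals of a product ring. -/
theorem stmt_19 {A₁ A₂ : Type*} [CommRing A₁] [CommRing A₂]
    (S₁ : Set A₁) (S₂ : Set A₂)
    (hS₁ : ∀ a ∈ S₁, ∀ b ∈ S₁, a * b ∈ S₁)
    (hS₂ : ∀ a ∈ S₂, ∀ b ∈ S₂, a * b ∈ S₂)
    (Q₁ : Ideal A₁) (Q₂ : Ideal A₂) (hQ₁ : Q₁ ≠ ⊥) (hQ₂ : Q₂ ≠ ⊥)
    (hdisj : ((Q₁.prod Q₂ : Ideal (A₁ × A₂)) : Set (A₁ × A₂)) ∩ (S₁ ×ˢ S₂) = ∅) :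
    ((∃ s ∈ S₁ ×ˢ S₂, ∀ x y : A₁ × A₂, x * y ≠ 0 → x * y ∈ Q₁.prod Q₂ →
        s * x ∈ Q₁.prod Q₂ ∨ s * y ∈ Q₁.prod Q₂) ↔
      (((∃ s ∈ S₁, ∀ x y : A₁, x * y ∈ Q₁ → s * x ∈ Q₁ ∨ s * y ∈ Q₁) ∧
          ((Q₂ : Set A₂) ∩ S₂).Nonempty) ∨
        ((∃ s ∈ S₂, ∀ x y : A₂, x * y ∈ Q₂ → s * x ∈ Q₂ ∨ s * y ∈ Q₂) ∧
          ((Q₁ : Set A₁) ∩ S₁).Nonempty))) ∧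
    (((∃ s ∈ S₁, ∀ x y : A₁, x * y ∈ Q₁ → s * x ∈ Q₁ ∨ s * y ∈ Q₁) ∧
          ((Q₂ : Set A₂) ∩ S₂).Nonempty) ∨
        ((∃ s ∈ S₂, ∀ x y : A₂, x * y ∈ Q₂ → s * x ∈ Q₂ ∨ s * y ∈ Q₂) ∧
          ((Q₁ : Set A₁) ∩ S₁).Nonempty) ↔
      (∃ s ∈ S₁ ×ˢ S₂, ∀ x y : A₁ × A₂, x * y ∈ Q₁.prod Q₂ →
        s * x ∈ Q₁.prod Q₂ ∨ s * y ∈ Q₁.prod Q₂)) := by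
  have memp : ∀ z : A₁ × A₂, z ∈ Q₁.prod Q₂ ↔ z.1 ∈ Q₁ ∧ z.2 ∈ Q₂ := fun z => Ideal.mem_prod Q₁ Q₂
  obtain ⟨q₁, hq₁Q, hq₁0⟩ := (Submodule.ne_bot_iff _).mp hQ₁
  obtain ⟨q₂, hq₂Q, hq₂0⟩ := (Submodule.ne_bot_iff _).mp hQ₂
  -- (ii) → (iii)
  have h23 : (((∃ s ∈ S₁, ∀ x y : A₁, x * y ∈ Q₁ → s * x ∈ Q₁ ∨ s * y ∈ Q₁) ∧
          ((Q₂ : Set A₂) ∩ S₂).Nonempty) ∨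
        ((∃ s ∈ S₂, ∀ x y : A₂, x * y ∈ Q₂ → s * x ∈ Q₂ ∨ s * y ∈ Q₂) ∧
          ((Q₁ : Set A₁) ∩ S₁).Nonempty)) →
      (∃ s ∈ S₁ ×ˢ S₂, ∀ x y : A₁ × A₂, x * y ∈ Q₁.prod Q₂ →
        s * x ∈ Q₁.prod Q₂ ∨ s * y ∈ Q₁.prod Q₂) := by
    rintro (⟨⟨s₁, hs₁, hp⟩, ⟨t₂, ht₂Q, ht₂S⟩⟩ | ⟨⟨s₂, hs₂, hp⟩, ⟨t₁, ht₁Q, ht₁S⟩⟩)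
    · refine ⟨(s₁, t₂), Set.mk_mem_prod hs₁ ht₂S, ?_⟩
      intro x y hxy
      rw [memp] at hxy
      rcases hp x.1 y.1 hxy.1 with h | h
      · exact Or.inl ((memp _).mpr ⟨h, Q₂.mul_mem_right _ ht₂Q⟩)
      · exact Or.inr ((memp _).mpr ⟨h, Q₂.mul_mem_right _ ht₂Q⟩)
    · refine ⟨(t₁, s₂), Set.mk_mem_prod ht₁S hs₂, ?_⟩
      intro x y hxy
      rw [memp] at hxy
      rcases hp x.2 y.2 hxy.2 with h | h
      · exact Or.inl ((memp _).mpr ⟨Q₁.mul_mem_right _ ht₁Q, h⟩)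
      · exact Or.inr ((memp _).mpr ⟨Q₁.mul_mem_right _ ht₁Q, h⟩)
  -- (iii) → (i)
  have h31 : (∃ s ∈ S₁ ×ˢ S₂, ∀ x y : A₁ × A₂, x * y ∈ Q₁.prod Q₂ →
        s * x ∈ Q₁.prod Q₂ ∨ s * y ∈ Q₁.prod Q₂) →
      (∃ s ∈ S₁ ×ˢ S₂, ∀ x y : A₁ × A₂, x * y ≠ 0 → x * y ∈ Q₁.prod Q₂ →
        s * x ∈ Q₁.prod Q₂ ∨ s * y ∈ Q₁.prod Q₂) := by
    rintro ⟨s, hs, h⟩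
    exact ⟨s, hs, fun x y _ hxy => h x y hxy⟩
  -- (i) → (ii)
  have h12 : (∃ s ∈ S₁ ×ˢ S₂, ∀ x y : A₁ × A₂, x * y ≠ 0 → x * y ∈ Q₁.prod Q₂ →
        s * x ∈ Q₁.prod Q₂ ∨ s * y ∈ Q₁.prod Q₂) →
      (((∃ s ∈ S₁, ∀ x y : A₁, x * y ∈ Q₁ → s * x ∈ Q₁ ∨ s * y ∈ Q₁) ∧
          ((Q₂ : Set A₂) ∩ S₂).Nonempty) ∨
        ((∃ s ∈ S₂, ∀ x y : A₂, x * y ∈ Q₂ → s * x ∈ Q₂ ∨ s * y ∈ Q₂) ∧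
          ((Q₁ : Set A₁) ∩ S₁).Nonempty)) := by
    rintro ⟨⟨s₁, s₂⟩, hs, h⟩
    have hs₁ : s₁ ∈ S₁ := hs.1
    have hs₂ : s₂ ∈ S₂ := hs.2
    have key := h (q₁, 1) (1, q₂)
      (by simp [Prod.ext_iff, hq₁0]) ((memp _).mpr (by simpa using ⟨hq₁Q, hq₂Q⟩))
    rcases key with hk | hk
    · -- s₂ * 1 ∈ Q₂, so s₂ ∈ Q₂ ∩ S₂ ; prove Q₁ is S₁-prime with s₁
      have hs₂Q : s₂ ∈ Q₂ := by simpa using ((memp _).mp hk).2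
      refine Or.inl ⟨⟨s₁, hs₁, ?_⟩, ⟨s₂, hs₂Q, hs₂⟩⟩
      intro x y hxy
      have := h (x, 1) (y, q₂)
        (by simp [Prod.ext_iff, hq₂0]) ((memp _).mpr (by simpa using ⟨hxy, hq₂Q⟩))
      rcases this with hh | hh
      · exact Or.inl ((memp _).mp hh).1
      · exact Or.inr ((memp _).mp hh).1
    · have hs₁Q : s₁ ∈ Q₁ := by simpa using ((memp _).mp hk).1
      refine Or.inr ⟨⟨s₂, hs₂, ?_⟩, ⟨s₁, hs₁Q, hs₁⟩⟩
      intro x y hxy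
      have := h (1, x) (q₁, y)
        (by simp [Prod.ext_iff, hq₁0]) ((memp _).mpr (by simpa using ⟨hq₁Q, hxy⟩))
      rcases this with hh | hh
      · exact Or.inl ((memp _).mp hh).2
      · exact Or.inr ((memp _).mp hh).2
  exact ⟨⟨h12, fun h => h31 (h23 h)⟩, ⟨h23, fun h => h12 (h31 h)⟩⟩
end
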